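/- For all real a, c and all real b ≠ 0, there do not exist integers p, q with (p ≥ 0 and q ≤ -1) or (p ≤ -1 and q ≥ 0) such that p·q = 1/b². Consequently, the Morales–Ramis abelianity condition for the Whittaker equation arising from the Huang–Li system fails for all parameter values. -/
import Mathlib


/-- For all real `a, c` and all real `b ≠ 0`, there are no integers `p, q` with
`(p ≥ 0 ∧ q ≤ -1)` or `(p ≤ -1 ∧ q ≥ 0)` such that `pq = 1/b²`: the
Morales–Ramis abelianity condition for the Whittaker equation arising from the
Huang–Li system fails for all parameter values. -/
theorem stmt_12 (a c : ℝ) : ∀ b : ℝ, b ≠ 0 →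
    ¬ ∃ p q : ℤ, ((0 ≤ p ∧ q ≤ -1) ∨ (p ≤ -1 ∧ 0 ≤ q)) ∧
      ((p * q : ℤ) : ℝ) = 1 / b ^ 2 := by
  rintro b hb ⟨p, q, hpq, heq⟩
  have hpos : (0:ℝ) < 1 / b ^ 2 := by positivity
  have hle : (p * q : ℤ) ≤ 0 := by
    rcases hpq with ⟨hp, hq⟩ | ⟨hp, hq⟩
    · exact mul_nonpos_of_nonneg_of_nonpos hp (hq.trans (by norm_num))
    · exact mul_nonpos_of_nonpos_of_nonneg (hp.trans (by norm_num)) hq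
  have : ((p * q : ℤ) : ℝ) ≤ 0 := by exact_mod_cast hle
  linarith
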